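/- Let μ be an infinite cardinal and X a topological space whose tightness is at most μ and such that for every free set D ⊆ X the closure of D has Lindelöf number at most μ (every cover of the closure of D by open subsets of X has a subfamily of size at most μ covering it). Then X contains no free sequence of length μ⁺ (the cardinal successor of μ). -/

import Mathlib

open Cardinal Set Filter Topology

/-- `IsFreeSequence x` says that the injective transfinite family `x`, indexed by the
ordinals below `η`, is a free sequence: for every `β < η` the closure of the initial
part `{x_α : α < β}` is disjoint from the closure of the final part `{x_α : β ≤ α}`. -/
def IsFreeSequence {X : Type u} [TopologicalSpace X] {η : Ordinal.{u}}
    (x : Set.Iio η → X) : Prop :=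
  Function.Injective x ∧
    ∀ β : Set.Iio η,
      Disjoint (closure (x '' {α | (α : Ordinal) < (β : Ordinal)}))
        (closure (x '' {α | (β : Ordinal) ≤ (α : Ordinal)}))

/-- A set `D` is *free* if it can be enumerated as a free sequence. -/
def IsFreeSet {X : Type u} [TopologicalSpace X] (D : Set X) : Prop :=
  ∃ (η : Ordinal.{u}) (x : Set.Iio η → X), IsFreeSequence x ∧ Set.range x = D

/-! Let `x` be a free sequence of length `η` with `μ < cf η`. By tightness every point of
`closure (range x)` lies in the closure of an initial segment `x '' Iio β`, hence, by freeness,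
in the open set `U β`, the complement of the closure of the final segment `x '' Ici β`. The
Lindelöf hypothesis then yields at most `μ` of the `U β` covering `range x`, which is absurd:
they all miss `x γ` for any `γ` above their indices. For `η = μ⁺` we have `cf η = μ⁺ > μ`. -/

namespace Ordinal

theorem exists_forall_lt_of_mk_lt_cof {η : Ordinal.{u}} {ι : Type u} (hι : #ι < η.cof)
    (a : ι → Iio η) : ∃ γ : Iio η, ∀ i, a i < γ :=
  ⟨⟨⨆ i, (a i : Ordinal) + 1, iSup_add_one_lt_of_lt_cof hι fun i ↦ (a i).2⟩,
    fun i ↦ lt_iSup_add_one (fun i ↦ (a i : Ordinal)) i⟩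

end Ordinal

theorem exists_subset_image_Iio_of_mk_lt_cof {X : Type u} {η : Ordinal.{u}} {x : Iio η → X}
    {B : Set X} (hB : B ⊆ range x) (hcard : #B < η.cof) : ∃ γ : Iio η, B ⊆ x '' Iio γ := by
  choose a ha using fun b : B ↦ hB b.2
  obtain ⟨γ, hγ⟩ := Ordinal.exists_forall_lt_of_mk_lt_cof hcard a
  exact ⟨γ, fun b hb ↦ ⟨a ⟨b, hb⟩, hγ ⟨b, hb⟩, ha ⟨b, hb⟩⟩⟩

section FreeSequence

variable {X : Type u} [TopologicalSpace X] {η : Ordinal.{u}}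

theorem IsFreeSequence.closure_range_subset_iUnion {μ : Cardinal.{u}} {x : Iio η → X}
    (hx : IsFreeSequence x)
    (htight : ∀ A : Set X, ∀ y ∈ closure A, ∃ B ⊆ A, #B ≤ μ ∧ y ∈ closure B)
    (hμ : μ < η.cof) : closure (range x) ⊆ ⋃ β, (closure (x '' Ici β))ᶜ := by
  intro y hy
  obtain ⟨B, hBx, hBμ, hyB⟩ := htight _ y hy
  obtain ⟨γ, hγ⟩ := exists_subset_image_Iio_of_mk_lt_cof hBx (hBμ.trans_lt hμ)
  exact mem_iUnion.2 ⟨γ, disjoint_left.1 (hx.2 γ) (closure_mono hγ hyB)⟩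

theorem not_range_subset_sUnion_of_mk_lt_cof (x : Iio η → X) {𝒱 : Set (Set X)}
    (h𝒱 : 𝒱 ⊆ range fun β ↦ (closure (x '' Ici β))ᶜ) (hcard : #𝒱 < η.cof) :
    ¬ range x ⊆ ⋃₀ 𝒱 := by
  intro hcover
  choose β hβ using fun V : 𝒱 ↦ h𝒱 V.2
  obtain ⟨γ, hγ⟩ := Ordinal.exists_forall_lt_of_mk_lt_cof hcard β
  obtain ⟨V, hV𝒱, hxV⟩ := hcover (mem_range_self γ)
  exact (hβ ⟨V, hV𝒱⟩).ge hxV (subset_closure (mem_image_of_mem x (hγ ⟨V, hV𝒱⟩).le))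

end FreeSequence

theorem no_free_sequence_of_length_succ
    {X : Type u} [TopologicalSpace X] (μ : Cardinal.{u})
    (hμ : ℵ₀ ≤ μ)
    (htight : ∀ A : Set X, ∀ x ∈ closure A, ∃ B ⊆ A, #B ≤ μ ∧ x ∈ closure B)
    (hfree : ∀ D : Set X, IsFreeSet D →
      ∀ 𝒰 : Set (Set X), (∀ U ∈ 𝒰, IsOpen U) → closure D ⊆ ⋃₀ 𝒰 →
        ∃ 𝒱 ⊆ 𝒰, #𝒱 ≤ μ ∧ closure D ⊆ ⋃₀ 𝒱) :
    ¬ ∃ x : Set.Iio (Order.succ μ).ord → X, IsFreeSequence x := by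
  rintro ⟨x, hx⟩
  have hcof : μ < (Order.succ μ).ord.cof := by
    rw [(isRegular_succ hμ).cof_ord]
    exact Order.lt_succ μ
  obtain ⟨𝒱, h𝒱, hcard, hcover⟩ :=
    hfree (range x) ⟨_, x, hx, rfl⟩ _ (by rintro _ ⟨β, rfl⟩; exact isClosed_closure.isOpen_compl)
      ((hx.closure_range_subset_iUnion htight hcof).trans_eq (sUnion_range _).symm)
  exact not_range_subset_sUnion_of_mk_lt_cof x h𝒱 (hcard.trans_lt hcof)
    (subset_closure.trans hcover)
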